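/- Any initial segment of the Thue-Morse sequence written over the alphabet {0,1}, for either assignment of the two players to the two symbols, agrees with some base-(1+1/n) expansion of n/2 (with all digits to the right of the radix point) for all sufficiently large n. Precisely: let b_i = (1 + t_i)/2 ∈ {0,1}. For every N ∈ ℕ there exists n_0 such that for all integers n ≥ n_0, setting β = 1 + 1/n, there exists a digit sequence c : ℕ → {0,1} with c_i = b_i for all i < N and ∑_{i=0}^{∞} c_i β^{−(i+1)} = n/2; and likewise there exists a digit sequence c' : ℕ → {0,1} with c'_i = 1 − b_i for all i < N and ∑_{i=0}^{∞} c'_i β^{−(i+1)} = n/2. -/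

import Mathlib

/-- The Thue-Morse sequence on the alphabet `{-1, 1}`:
`t 0 = -1`, `t (2i) = t i`, `t (2i+1) = -t (2i)`. -/
def thueMorse : ℕ → ℤ
  | 0 => -1
  | n + 1 =>
    have : (n + 1) / 2 < n + 1 := Nat.div_lt_self (Nat.succ_pos n) one_lt_two
    if (n + 1) % 2 = 0 then thueMorse ((n + 1) / 2) else -thueMorse ((n + 1) / 2)

/-!
For `1 < β ≤ 2` the greedy algorithm expands every `x ∈ [0, 1/(β-1)]` in base `β` with digits
in `{0, 1}`: the remainders `β^k (x - ∑_{i<k} d_i β^{-(i+1)})` never leave that interval.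
Hence a prescribed 0/1 prefix of length `N` extends to an expansion of `x` as soon as its
remainder `β^N (x - ∑_{i<N} b_i β^{-(i+1)})` lies in `[0, 1/(β-1)]`. For the midpoint
`x = 1/(2(β-1))` this holds for every 0/1 prefix once `β^N ≤ 2`. With `β = 1 + 1/n` the
midpoint is `n/2` and `β^N → 1`, so it suffices that the Thue–Morse digits `(1 ± t_i)/2`
lie in `{0, 1}`.
-/

open Finset Filter Topology

lemma thueMorse_eq_one_or_neg_one (i : ℕ) : thueMorse i = 1 ∨ thueMorse i = -1 := by
  induction i using Nat.strong_induction_on with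
  | _ i ih =>
    match i with
    | 0 => simp [thueMorse]
    | n + 1 =>
      have := ih ((n + 1) / 2) (Nat.div_lt_self n.succ_pos one_lt_two)
      rw [thueMorse]
      split <;> omega

section Greedy

variable {β x : ℝ}

noncomputable def greedyRem (β x : ℝ) : ℕ → ℝ
  | 0 => x
  | k + 1 => if 1 ≤ β * greedyRem β x k then β * greedyRem β x k - 1 else β * greedyRem β x k

noncomputable def greedyDigit (β x : ℝ) (k : ℕ) : ℕ := if 1 ≤ β * greedyRem β x k then 1 else 0

lemma greedyDigit_le_one (β x : ℝ) (k : ℕ) : greedyDigit β x k ≤ 1 := by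
  unfold greedyDigit; split <;> simp

lemma greedyRem_succ (k : ℕ) :
    greedyRem β x (k + 1) = β * greedyRem β x k - greedyDigit β x k := by
  rw [greedyRem, greedyDigit]; split <;> simp

lemma greedyRem_mem_Icc (hβ : 1 < β) (hβ2 : β ≤ 2) (hx : x ∈ Set.Icc 0 (β - 1)⁻¹) (k : ℕ) :
    greedyRem β x k ∈ Set.Icc 0 (β - 1)⁻¹ := by
  have hβ1 : 0 < β - 1 := by linarith
  induction k with
  | zero => exact hx
  | succ k ih =>
    obtain ⟨ih0, ih1⟩ := ih
    have hβr : β * greedyRem β x k ≤ (β - 1)⁻¹ + 1 := by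
      calc β * greedyRem β x k ≤ β * (β - 1)⁻¹ := by gcongr
        _ = (β - 1)⁻¹ + 1 := by field_simp; ring
    -- `β ≤ 2` is what keeps `β * r < 1` in the interval when the digit is `0`.
    have hone : 1 ≤ (β - 1)⁻¹ := by rw [one_le_inv₀ hβ1]; linarith
    rw [greedyRem]
    split_ifs with h
    · constructor <;> linarith
    · constructor <;> nlinarith

lemma sum_range_greedyDigit_div_pow (hβ : β ≠ 0) (k : ℕ) :
    ∑ i ∈ range k, (greedyDigit β x i : ℝ) / β ^ (i + 1) = x - greedyRem β x k / β ^ k := by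
  induction k with
  | zero => simp [greedyRem]
  | succ k ih =>
    rw [sum_range_succ, ih, greedyRem_succ]
    field_simp
    ring

theorem hasSum_greedyDigit (hβ : 1 < β) (hβ2 : β ≤ 2) (hx : x ∈ Set.Icc 0 (β - 1)⁻¹) :
    HasSum (fun i ↦ (greedyDigit β x i : ℝ) / β ^ (i + 1)) x := by
  have hβ0 : 0 < β := by linarith
  rw [hasSum_iff_tendsto_nat_of_nonneg (fun i ↦ by positivity)]
  simp_rw [sum_range_greedyDigit_div_pow hβ0.ne']
  have hbound (k : ℕ) : greedyRem β x k / β ^ k ≤ (β - 1)⁻¹ * β⁻¹ ^ k := by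
    rw [inv_pow, ← div_eq_mul_inv]
    gcongr
    exact (greedyRem_mem_Icc hβ hβ2 hx k).2
  have hgeom : Tendsto (fun k : ℕ ↦ (β - 1)⁻¹ * β⁻¹ ^ k) atTop (𝓝 0) := by
    simpa using (tendsto_pow_atTop_nhds_zero_of_lt_one (by positivity)
      (inv_lt_one_of_one_lt₀ hβ)).const_mul (β - 1)⁻¹
  have hrem := squeeze_zero
    (fun k ↦ div_nonneg (greedyRem_mem_Icc hβ hβ2 hx k).1 (by positivity)) hbound hgeom
  simpa using tendsto_const_nhds (x := x) |>.sub hrem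

end Greedy

section Prefix

variable {β : ℝ}

theorem exists_digits_extending_prefix (hβ : 1 < β) (hβ2 : β ≤ 2) {N : ℕ} {b : ℕ → ℕ}
    (hb : ∀ i, b i ≤ 1) {x : ℝ}
    (hx : x - ∑ i ∈ range N, (b i : ℝ) / β ^ (i + 1) ∈ Set.Icc 0 ((β - 1)⁻¹ / β ^ N)) :
    ∃ c : ℕ → ℕ, (∀ i, c i ≤ 1) ∧ (∀ i < N, c i = b i) ∧
      HasSum (fun i ↦ (c i : ℝ) / β ^ (i + 1)) x := by
  have hβN : 0 < β ^ N := by positivity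
  set S := ∑ i ∈ range N, (b i : ℝ) / β ^ (i + 1)
  set y := (x - S) * β ^ N
  have hy : y ∈ Set.Icc 0 (β - 1)⁻¹ := by
    obtain ⟨h0, h1⟩ := hx
    exact ⟨by positivity, (le_div_iff₀ hβN).1 h1⟩
  let c : ℕ → ℕ := fun i ↦ if i < N then b i else greedyDigit β y (i - N)
  have hc_prefix (i : ℕ) (hi : i < N) : c i = b i := if_pos hi
  refine ⟨c, fun i ↦ ?_, hc_prefix, ?_⟩
  · by_cases hi : i < N
    · simpa [c, hi] using hb i
    · simpa [c, hi] using greedyDigit_le_one β y (i - N)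
  have htail : HasSum (fun i ↦ (c (i + N) : ℝ) / β ^ (i + N + 1)) (x - S) := by
    have h := (hasSum_greedyDigit hβ hβ2 hy).div_const (β ^ N)
    rw [show y / β ^ N = x - S from mul_div_cancel_right₀ _ hβN.ne'] at h
    have hshift : (fun i ↦ (c (i + N) : ℝ) / β ^ (i + N + 1)) =
        fun i ↦ (greedyDigit β y i : ℝ) / β ^ (i + 1) / β ^ N := by
      ext i
      simp [c, div_div, ← pow_add, add_right_comm]
    rwa [hshift]
  have hS : ∑ i ∈ range N, (c i : ℝ) / β ^ (i + 1) = S :=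
    sum_congr rfl fun i hi ↦ by rw [hc_prefix i (mem_range.1 hi)]
  rwa [← hasSum_nat_add_iff' N, hS]

lemma sub_one_mul_sum_range_one_div_pow (hβ : β ≠ 0) (N : ℕ) :
    (β - 1) * ∑ i ∈ range N, 1 / β ^ (i + 1) = 1 - 1 / β ^ N := by
  have hterm (i : ℕ) : (β - 1) * (1 / β ^ (i + 1)) = 1 / β ^ i - 1 / β ^ (i + 1) := by
    field_simp
    ring
  simp_rw [mul_sum, hterm, sum_range_sub', pow_zero, div_one]

theorem exists_digits_extending_prefix_of_pow_le_two (hβ : 1 < β) (hβ2 : β ≤ 2) {N : ℕ}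
    (hβN : β ^ N ≤ 2) {b : ℕ → ℕ} (hb : ∀ i, b i ≤ 1) :
    ∃ c : ℕ → ℕ, (∀ i, c i ≤ 1) ∧ (∀ i < N, c i = b i) ∧
      HasSum (fun i ↦ (c i : ℝ) / β ^ (i + 1)) (2 * (β - 1))⁻¹ := by
  have hβ1 : 0 < β - 1 := by linarith
  have hβN0 : 0 < β ^ N := by positivity
  refine exists_digits_extending_prefix hβ hβ2 hb ⟨?_, ?_⟩
  · have hS : ∑ i ∈ range N, (b i : ℝ) / β ^ (i + 1) ≤ ∑ i ∈ range N, 1 / β ^ (i + 1) :=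
      sum_le_sum fun i _ ↦ by gcongr; exact_mod_cast hb i
    have hgeom := sub_one_mul_sum_range_one_div_pow (by positivity : β ≠ 0) N
    have hhalf : 1 / 2 ≤ 1 / β ^ N := one_div_le_one_div_of_le hβN0 hβN
    rw [sub_nonneg, mul_inv, inv_eq_one_div 2, le_mul_inv_iff₀ hβ1]
    nlinarith
  · have hS : 0 ≤ ∑ i ∈ range N, (b i : ℝ) / β ^ (i + 1) := by positivity
    calc (2 * (β - 1))⁻¹ - ∑ i ∈ range N, (b i : ℝ) / β ^ (i + 1) ≤ (2 * (β - 1))⁻¹ := by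
          linarith
      _ ≤ (β - 1)⁻¹ / β ^ N := by
        rw [mul_comm, mul_inv, ← div_eq_mul_inv]
        gcongr

end Prefix

/-- any initial segment of the Thue-Morse sequence written over `{0,1}`
(with `b_i = (1 + t_i)/2`), for either assignment of the players to the symbols,
agrees with some base-`(1 + 1/n)` expansion of `n/2` with all digits to the right of
the radix point, for all sufficiently large `n`. -/
theorem thueMorse_initialSegment_is_beta_expansion (N : ℕ) :
    ∃ n₀ : ℕ, ∀ n : ℕ, n₀ ≤ n →
      (∃ c : ℕ → ℕ, (∀ i, c i ≤ 1) ∧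
        (∀ i < N, (c i : ℤ) = (1 + thueMorse i) / 2) ∧
        (∑' i : ℕ, (c i : ℝ) / (1 + 1 / (n : ℝ)) ^ (i + 1)) = (n : ℝ) / 2) ∧
      (∃ c' : ℕ → ℕ, (∀ i, c' i ≤ 1) ∧
        (∀ i < N, (c' i : ℤ) = 1 - (1 + thueMorse i) / 2) ∧
        (∑' i : ℕ, (c' i : ℝ) / (1 + 1 / (n : ℝ)) ^ (i + 1)) = (n : ℝ) / 2) := by
  have hpow_small : ∀ᶠ n : ℕ in atTop, (1 + 1 / (n : ℝ)) ^ N ≤ 2 :=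
    ((tendsto_const_nhds.add tendsto_one_div_atTop_nhds_zero_nat).pow N).eventually
      (eventually_le_nhds (by norm_num))
  obtain ⟨n₀, hn₀⟩ := eventually_atTop.1 (hpow_small.and (eventually_ge_atTop 1))
  refine ⟨n₀, fun n hn ↦ ?_⟩
  obtain ⟨hpow, hn1⟩ := hn₀ n hn
  have hβ : 1 < 1 + 1 / (n : ℝ) := by simp only [lt_add_iff_pos_right]; positivity
  have hβ2 : 1 + 1 / (n : ℝ) ≤ 2 := by
    linarith [(div_le_one₀ (by positivity : (0 : ℝ) < n)).2 (Nat.one_le_cast.2 hn1)]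
  have hmid : (2 * (1 + 1 / (n : ℝ) - 1))⁻¹ = n / 2 := by field_simp; ring
  have extend (z : ℕ → ℤ) (hz : ∀ i, 0 ≤ z i ∧ z i ≤ 1) : ∃ c : ℕ → ℕ, (∀ i, c i ≤ 1) ∧
      (∀ i < N, (c i : ℤ) = z i) ∧ ∑' i : ℕ, (c i : ℝ) / (1 + 1 / (n : ℝ)) ^ (i + 1) = n / 2 := by
    obtain ⟨c, hc1, hcz, hsum⟩ := exists_digits_extending_prefix_of_pow_le_two hβ hβ2 hpow
      (b := fun i ↦ (z i).toNat) (fun i ↦ by have := hz i; omega)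
    exact ⟨c, hc1, fun i hi ↦ by rw [hcz i hi, Int.toNat_of_nonneg (hz i).1], hmid ▸ hsum.tsum_eq⟩
  have hbit (i : ℕ) : 0 ≤ (1 + thueMorse i) / 2 ∧ (1 + thueMorse i) / 2 ≤ 1 := by
    rcases thueMorse_eq_one_or_neg_one i with h | h <;> simp [h]
  exact ⟨extend _ hbit, extend _ fun i ↦ by have := hbit i; omega⟩
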